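/- arXiv:2207.13468 — 3 statements merged into one kernel-verified Lean document; each statement's English description precedes it below -/
import Mathlib

section
/- With ω and m as in the Burns metric setup, and ρ = ∂∂̄ ln(|z|² + m/(1+|u|²)), one has ρ = (m/(|z|²(1+|u|²)+m)²)·[(1+|u|²) dz∧dz̄ + (((|z|²(1+|u|²)+m)(|u|²-1) - m|u|²)/(1+|u|²)²) du∧dū + ūz du∧dz̄ + uz̄ dz∧dū]. -/
open Complex

/-- The Wirtinger derivative `∂f/∂z = ½(∂f/∂x - i ∂f/∂y)`. -/
noncomputable def wderiv (f : ℂ → ℂ) (p : ℂ) : ℂ :=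
  (deriv (fun t : ℝ => f (p + t)) 0 - Complex.I * deriv (fun t : ℝ => f (p + t * Complex.I)) 0) / 2

/-- The conjugate Wirtinger derivative `∂f/∂z̄ = ½(∂f/∂x + i ∂f/∂y)`. -/
noncomputable def wderivBar (f : ℂ → ℂ) (p : ℂ) : ℂ :=
  (deriv (fun t : ℝ => f (p + t)) 0 + Complex.I * deriv (fun t : ℝ => f (p + t * Complex.I)) 0) / 2

/-!
Every function in sight depends on `z` and `u` only through `|z|²` and `|u|²`, possibly times `z`
or `u`. For a radial function the Wirtinger derivatives are one-variable derivatives: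
`∂̄ ψ(|p|²) = p ψ'`, `∂ ψ(|p|²) = p̄ ψ'` and `∂ (p ψ(|p|²)) = ψ + |p|² ψ'`. So each
coefficient of `ρ` is built from first and second partial derivatives of `(s, t) ↦ ln(s + m/(1+t))`
and the formulas follow by rational-function algebra.
-/

open ComplexConjugate

section Wirtinger

variable {f : ℂ → ℂ} {p : ℂ}

theorem wderiv_eq_of_hasDerivAt_line {D : ℂ → ℂ}
    (h : ∀ v, HasDerivAt (fun t : ℝ => f (p + t * v)) (D v) 0) :
    wderiv f p = (D 1 - I * D I) / 2 := by
  have h1 := h 1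
  simp only [mul_one] at h1
  rw [wderiv, h1.deriv, (h I).deriv]

theorem wderivBar_eq_of_hasDerivAt_line {D : ℂ → ℂ}
    (h : ∀ v, HasDerivAt (fun t : ℝ => f (p + t * v)) (D v) 0) :
    wderivBar f p = (D 1 + I * D I) / 2 := by
  have h1 := h 1
  simp only [mul_one] at h1
  rw [wderivBar, h1.deriv, (h I).deriv]

theorem hasDerivAt_normSq_add_mul (p v : ℂ) :
    HasDerivAt (fun t : ℝ => normSq (p + t * v)) (2 * (p * conj v).re) 0 := by
  have hpoly : (fun t : ℝ => normSq (p + t * v))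
      = fun t => normSq p + t * (2 * (p * conj v).re) + t ^ 2 * normSq v := by
    funext t
    simp only [normSq_apply, add_re, add_im, mul_re, mul_im, ofReal_re, ofReal_im, conj_re, conj_im]
    ring
  rw [hpoly]
  exact ((((hasDerivAt_id (0 : ℝ)).mul_const _).const_add _).add
    ((hasDerivAt_pow 2 (0 : ℝ)).mul_const _)).congr_deriv (by simp)

variable {ψ : ℝ → ℂ} {ψ' : ℂ}

theorem hasDerivAt_comp_normSq_add_mul (hψ : HasDerivAt ψ ψ' (normSq p)) (v : ℂ) :
    HasDerivAt (fun t : ℝ => ψ (normSq (p + t * v))) ((2 * (p * conj v).re : ℝ) • ψ') 0 :=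
  hψ.scomp_of_eq 0 (hasDerivAt_normSq_add_mul p v) (by simp)

theorem conj_eq_re_sub_im_mul_I (p : ℂ) : conj p = p.re - p.im * I := by
  apply Complex.ext <;> simp

theorem wderivBar_comp_normSq (hψ : HasDerivAt ψ ψ' (normSq p)) :
    wderivBar (fun z => ψ (normSq z)) p = p * ψ' := by
  rw [wderivBar_eq_of_hasDerivAt_line (hasDerivAt_comp_normSq_add_mul hψ)]
  simp only [map_one, mul_one, conj_I, mul_neg, neg_re, mul_re, I_re, I_im, mul_zero, zero_sub,
    neg_neg, real_smul, ofReal_mul, ofReal_ofNat]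
  linear_combination ψ' * re_add_im p

theorem wderiv_comp_normSq (hψ : HasDerivAt ψ ψ' (normSq p)) :
    wderiv (fun z => ψ (normSq z)) p = conj p * ψ' := by
  rw [wderiv_eq_of_hasDerivAt_line (hasDerivAt_comp_normSq_add_mul hψ)]
  simp only [map_one, mul_one, conj_I, mul_neg, neg_re, mul_re, I_re, I_im, mul_zero, zero_sub,
    neg_neg, real_smul, ofReal_mul, ofReal_ofNat]
  linear_combination (-ψ') * conj_eq_re_sub_im_mul_I p

theorem wderiv_mul_comp_normSq (hψ : HasDerivAt ψ ψ' (normSq p)) :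
    wderiv (fun z => z * ψ (normSq z)) p = ψ (normSq p) + normSq p * ψ' := by
  have hline (v : ℂ) : HasDerivAt (fun t : ℝ => (p + t * v) * ψ (normSq (p + t * v)))
      (v * ψ (normSq p) + p * ((2 * (p * conj v).re : ℝ) • ψ')) 0 := by
    have hl : HasDerivAt (fun t : ℝ => p + t * v) v 0 := by
      simpa using ((hasDerivAt_id (0 : ℝ)).ofReal_comp.mul_const v).const_add p
    exact (hl.mul (hasDerivAt_comp_normSq_add_mul hψ v)).congr_deriv (by simp)
  rw [wderiv_eq_of_hasDerivAt_line hline]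
  simp only [map_one, mul_one, conj_I, mul_neg, neg_re, mul_re, I_re, I_im, mul_zero, zero_sub,
    neg_neg, real_smul, ofReal_mul, ofReal_ofNat]
  linear_combination
    (-ψ' * p) * conj_eq_re_sub_im_mul_I p - ψ (normSq p) / 2 * I_sq + ψ' * mul_conj p

end Wirtinger

-- `burnsPotential m |z|² |u|²` is the potential `ln(|z|² + m/(1+|u|²))` of the Ricci form.
noncomputable def burnsPotential (m s t : ℝ) : ℝ := Real.log (s + m / (1 + t))

noncomputable def burnsPotentialDerivLeft (m s t : ℝ) : ℝ := (1 + t) / (s * (1 + t) + m)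

noncomputable def burnsPotentialDerivRight (m s t : ℝ) : ℝ := -m / ((1 + t) * (s * (1 + t) + m))

section BurnsPotential

variable {m s t : ℝ} (hm : 0 < m) (hs : 0 ≤ s) (ht : 0 ≤ t)
include hm hs ht

theorem mul_one_add_add_pos : 0 < s * (1 + t) + m := by positivity

theorem hasDerivAt_burnsPotential_left :
    HasDerivAt (burnsPotential m · t) (burnsPotentialDerivLeft m s t) s := by
  have ht' : 0 < 1 + t := by linarith
  refine (((hasDerivAt_id' s).add_const (m / (1 + t))).log (by positivity)).congr_deriv ?_
  rw [burnsPotentialDerivLeft]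
  field_simp

theorem hasDerivAt_burnsPotential_right :
    HasDerivAt (burnsPotential m s ·) (burnsPotentialDerivRight m s t) t := by
  have ht' : 0 < 1 + t := by linarith
  refine ((((hasDerivAt_const t m).fun_div ((hasDerivAt_id' t).const_add 1) ht'.ne').const_add
    s).log (by positivity)).congr_deriv ?_
  rw [burnsPotentialDerivRight]
  field_simp
  ring

theorem hasDerivAt_burnsPotentialDerivLeft_left :
    HasDerivAt (burnsPotentialDerivLeft m · t) (-(1 + t) ^ 2 / (s * (1 + t) + m) ^ 2) s := by
  refine ((hasDerivAt_const s (1 + t)).fun_div (((hasDerivAt_id' s).mul_const (1 + t)).add_const m)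
    (mul_one_add_add_pos hm hs ht).ne').congr_deriv ?_
  ring

theorem hasDerivAt_burnsPotentialDerivLeft_right :
    HasDerivAt (burnsPotentialDerivLeft m s ·) (m / (s * (1 + t) + m) ^ 2) t := by
  refine (((hasDerivAt_id' t).const_add 1).fun_div
    ((((hasDerivAt_id' t).const_add 1).const_mul s).add_const m)
    (mul_one_add_add_pos hm hs ht).ne').congr_deriv ?_
  ring

theorem hasDerivAt_burnsPotentialDerivRight_left :
    HasDerivAt (burnsPotentialDerivRight m · t) (m / (s * (1 + t) + m) ^ 2) s := by
  have ht' : 0 < 1 + t := by linarith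
  have hD := mul_one_add_add_pos hm hs ht
  refine ((hasDerivAt_const s (-m)).fun_div
    ((((hasDerivAt_id' s).mul_const (1 + t)).add_const m).const_mul (1 + t))
    (mul_pos ht' hD).ne').congr_deriv ?_
  field_simp
  ring

theorem hasDerivAt_burnsPotentialDerivRight_right :
    HasDerivAt (burnsPotentialDerivRight m s ·)
      (m * (2 * s * (1 + t) + m) / ((1 + t) ^ 2 * (s * (1 + t) + m) ^ 2)) t := by
  have ht' : 0 < 1 + t := by linarith
  have hD := mul_one_add_add_pos hm hs ht
  refine ((hasDerivAt_const t (-m)).fun_div (((hasDerivAt_id' t).const_add 1).mul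
    ((((hasDerivAt_id' t).const_add 1).const_mul s).add_const m))
    (mul_pos ht' hD).ne').congr_deriv ?_
  simp only [Pi.mul_apply]
  field_simp
  ring

end BurnsPotential

section BurnsRicci

variable {m : ℝ} (hm : 0 < m) (u z : ℂ)
include hm

theorem wderiv_wderivBar_burnsPotential_zz :
    wderiv (fun z' => wderivBar (fun z'' => (burnsPotential m (normSq z'') (normSq u) : ℂ)) z') z
      = ((m * (1 + normSq u) / (normSq z * (1 + normSq u) + m) ^ 2 : ℝ) : ℂ) := by
  have hinner :
      (fun z' => wderivBar (fun z'' => (burnsPotential m (normSq z'') (normSq u) : ℂ)) z')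
        = fun z' => z' * (burnsPotentialDerivLeft m (normSq z') (normSq u) : ℂ) :=
    funext fun z' => wderivBar_comp_normSq
      (hasDerivAt_burnsPotential_left hm (normSq_nonneg z') (normSq_nonneg u)).ofReal_comp
  rw [hinner, wderiv_mul_comp_normSq
    (hasDerivAt_burnsPotentialDerivLeft_left hm (normSq_nonneg z) (normSq_nonneg u)).ofReal_comp]
  have hD := mul_one_add_add_pos hm (normSq_nonneg z) (normSq_nonneg u)
  norm_cast
  rw [burnsPotentialDerivLeft]
  field_simp
  ring

theorem wderiv_wderivBar_burnsPotential_uu :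
    wderiv (fun u' => wderivBar (fun u'' => (burnsPotential m (normSq z) (normSq u'') : ℂ)) u') u
      = ((m * ((normSq z * (1 + normSq u) + m) * (normSq u - 1) - m * normSq u) /
          ((1 + normSq u) ^ 2 * (normSq z * (1 + normSq u) + m) ^ 2) : ℝ) : ℂ) := by
  have hinner :
      (fun u' => wderivBar (fun u'' => (burnsPotential m (normSq z) (normSq u'') : ℂ)) u')
        = fun u' => u' * (burnsPotentialDerivRight m (normSq z) (normSq u') : ℂ) :=
    funext fun u' => wderivBar_comp_normSq
      (hasDerivAt_burnsPotential_right hm (normSq_nonneg z) (normSq_nonneg u')).ofReal_comp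
  rw [hinner, wderiv_mul_comp_normSq
    (hasDerivAt_burnsPotentialDerivRight_right hm (normSq_nonneg z) (normSq_nonneg u)).ofReal_comp]
  have hu : 0 < 1 + normSq u := by linarith [normSq_nonneg u]
  have hD := mul_one_add_add_pos hm (normSq_nonneg z) (normSq_nonneg u)
  norm_cast
  rw [burnsPotentialDerivRight]
  field_simp
  ring

theorem wderiv_wderivBar_burnsPotential_uz :
    wderiv (fun u' => wderivBar (fun z' => (burnsPotential m (normSq z') (normSq u') : ℂ)) z) u
      = conj u * z * ((m / (normSq z * (1 + normSq u) + m) ^ 2 : ℝ) : ℂ) := by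
  have hinner : (fun u' => wderivBar (fun z' => (burnsPotential m (normSq z') (normSq u') : ℂ)) z)
      = fun u' => z * (burnsPotentialDerivLeft m (normSq z) (normSq u') : ℂ) :=
    funext fun u' => wderivBar_comp_normSq
      (hasDerivAt_burnsPotential_left hm (normSq_nonneg z) (normSq_nonneg u')).ofReal_comp
  rw [hinner, wderiv_comp_normSq
    ((hasDerivAt_burnsPotentialDerivLeft_right hm (normSq_nonneg z) (normSq_nonneg u)).ofReal_comp
      |>.const_mul z)]
  ring

theorem wderiv_wderivBar_burnsPotential_zu :
    wderiv (fun z' => wderivBar (fun u' => (burnsPotential m (normSq z') (normSq u') : ℂ)) u) z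
      = u * conj z * ((m / (normSq z * (1 + normSq u) + m) ^ 2 : ℝ) : ℂ) := by
  have hinner : (fun z' => wderivBar (fun u' => (burnsPotential m (normSq z') (normSq u') : ℂ)) u)
      = fun z' => u * (burnsPotentialDerivRight m (normSq z') (normSq u) : ℂ) :=
    funext fun z' => wderivBar_comp_normSq
      (hasDerivAt_burnsPotential_right hm (normSq_nonneg z') (normSq_nonneg u)).ofReal_comp
  rw [hinner, wderiv_comp_normSq
    ((hasDerivAt_burnsPotentialDerivRight_left hm (normSq_nonneg z) (normSq_nonneg u)).ofReal_comp
      |>.const_mul u)]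
  ring

end BurnsRicci

theorem stmt_15_general (m : ℝ) (hm : 0 < m) (u z : ℂ) :
    let g : ℂ → ℂ → ℂ := fun u z =>
      (Real.log (Complex.normSq z + m / (1 + Complex.normSq u)) : ℂ)
    let X : ℂ := (Complex.normSq z : ℂ) * (1 + (Complex.normSq u : ℂ))
    let F : ℂ := (m : ℂ) / (X + (m : ℂ)) ^ 2
    wderiv (fun z' => wderivBar (fun z'' => g u z'') z') z =
        F * (1 + (Complex.normSq u : ℂ)) ∧
    wderiv (fun u' => wderivBar (fun u'' => g u'' z) u') u =
        F * (((X + (m : ℂ)) * ((Complex.normSq u : ℂ) - 1) -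
            (m : ℂ) * (Complex.normSq u : ℂ)) / (1 + (Complex.normSq u : ℂ)) ^ 2) ∧
    wderiv (fun u' => wderivBar (fun z' => g u' z') z) u = F * ((starRingEnd ℂ) u * z) ∧
    wderiv (fun z' => wderivBar (fun u' => g u' z') u) z = F * (u * (starRingEnd ℂ) z) := by
  intro g X F
  have hu : (1 + normSq u : ℂ) ≠ 0 := by
    exact_mod_cast (by linarith [normSq_nonneg u] : (1 + normSq u : ℝ) ≠ 0)
  have hD : (normSq z * (1 + normSq u) + m : ℂ) ≠ 0 := by
    exact_mod_cast (mul_one_add_add_pos hm (normSq_nonneg z) (normSq_nonneg u)).ne'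
  refine ⟨(wderiv_wderivBar_burnsPotential_zz hm u z).trans ?_,
    (wderiv_wderivBar_burnsPotential_uu hm u z).trans ?_,
    (wderiv_wderivBar_burnsPotential_uz hm u z).trans ?_,
    (wderiv_wderivBar_burnsPotential_zu hm u z).trans ?_⟩
  all_goals
    simp only [F, X]
    push_cast
    field_simp

/-- The Ricci form `ρ = ∂∂̄ ln(|z|² + m/(1+|u|²))` of the Burns metric equals
`(m/(|z|²(1+|u|²)+m)²)·[(1+|u|²) dz∧dz̄ + (((|z|²(1+|u|²)+m)(|u|²-1)-m|u|²)/(1+|u|²)²) du∧dū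
  + ūz du∧dz̄ + uz̄ dz∧dū]`, stated as equality of the four coefficients of the
(1,1)-form, each coefficient being a mixed Wirtinger derivative. -/
theorem stmt_15 (m : ℝ) (hm : 0 < m) (u z : ℂ) (hz : z ≠ 0) :
    let g : ℂ → ℂ → ℂ := fun u z =>
      (Real.log (Complex.normSq z + m / (1 + Complex.normSq u)) : ℂ)
    let X : ℂ := (Complex.normSq z : ℂ) * (1 + (Complex.normSq u : ℂ))
    let F : ℂ := (m : ℂ) / (X + (m : ℂ)) ^ 2
    wderiv (fun z' => wderivBar (fun z'' => g u z'') z') z =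
        F * (1 + (Complex.normSq u : ℂ)) ∧
    wderiv (fun u' => wderivBar (fun u'' => g u'' z) u') u =
        F * (((X + (m : ℂ)) * ((Complex.normSq u : ℂ) - 1) -
            (m : ℂ) * (Complex.normSq u : ℂ)) / (1 + (Complex.normSq u : ℂ)) ^ 2) ∧
    wderiv (fun u' => wderivBar (fun z' => g u' z') z) u = F * ((starRingEnd ℂ) u * z) ∧
    wderiv (fun z' => wderivBar (fun u' => g u' z') u) z = F * (u * (starRingEnd ℂ) z) :=
  stmt_15_general m hm u z
end

section
/- For the Burns metric with Kähler form ω and Ricci form ρ as above, ω ∧ ρ = 0, i.e. the scalar curvature of the Burns metric vanishes. -/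
/-- `ω ∧ ρ = 0` for the Burns metric (vanishing scalar curvature): with
`X = |z|²(1+|u|²)`, the coefficient of `ω∧ρ` (divided by the overall factor
`m/(X+m)²`) vanishes:
`((X+m)(|u|²-1)-m|u|²)/(1+|u|²) + (|z|²+m/(1+|u|²)²)(1+|u|²) - 2|u|²|z|² = 0`. -/
theorem stmt_16 (m : ℝ) (hm : 0 < m) (u z : ℂ) (hz : z ≠ 0) :
    let a : ℝ := Complex.normSq u
    let s : ℝ := Complex.normSq z
    let X : ℝ := s * (1 + a)
    ((X + m) * (a - 1) - m * a) / (1 + a) +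
        (s + m / (1 + a) ^ 2) * (1 + a) - 2 * a * s = 0 := by
  intro a s X
  have ha : (0:ℝ) < 1 + a := by
    show (0:ℝ) < 1 + Complex.normSq u
    have := Complex.normSq_nonneg u; linarith
  field_simp [X]
  ring
end

section
/- The map φ : ℂ²∖{0} → ℂ²∖{0}, φ(Z) = Z/‖Z‖², is an involutive diffeomorphism, and in blow-up coordinates (u,z) (with z₁ = z, z₂ = uz) it is given by φ(u,z) = [ z̄(1+|u|²) : 1 : u ] in homogeneous coordinates on ℂℙ², extending smoothly over u-blow-up points by φ(0,[u₁,u₂]) = [0 : u₁ : u₂]. -/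
open Complex

/-- The inversion `φ(Z) = Z/‖Z‖²` on `ℂ²∖{0}`. -/
noncomputable def inversion (Z : ℂ × ℂ) : ℂ × ℂ :=
  ((Complex.normSq Z.1 + Complex.normSq Z.2)⁻¹ : ℝ) • Z

lemma nsq_pos {Z : ℂ × ℂ} (h : Z ≠ 0) : 0 < Complex.normSq Z.1 + Complex.normSq Z.2 := by
  rcases lt_or_eq_of_le (add_nonneg (Complex.normSq_nonneg Z.1) (Complex.normSq_nonneg Z.2)) with h' | h'
  · exact h'
  · exfalso
    have h1 : Complex.normSq Z.1 = 0 ∧ Complex.normSq Z.2 = 0 := by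
      constructor <;> nlinarith [Complex.normSq_nonneg Z.1, Complex.normSq_nonneg Z.2]
    exact h (Prod.ext (Complex.normSq_eq_zero.mp h1.1) (Complex.normSq_eq_zero.mp h1.2))

/-- The map `φ(Z) = Z/‖Z‖²` is an involutive self-map of `ℂ²∖{0}`, smooth away
from the origin, and in blow-up coordinates `(u,z)` (with `z₁ = z`, `z₂ = uz`)
it is given in homogeneous coordinates on `ℂℙ²` by
`φ(u,z) = [|z|²(1+|u|²) : z : uz] = [z̄(1+|u|²) : 1 : u]`: the two homogeneous
triples differ by the nonzero scalar `z`. -/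
theorem stmt_18 :
    (∀ Z : ℂ × ℂ, Z ≠ 0 → inversion Z ≠ 0 ∧ inversion (inversion Z) = Z) ∧
    ContDiffOn ℝ (⊤ : ℕ∞) inversion {(0 : ℂ × ℂ)}ᶜ ∧
    (∀ u z : ℂ, z ≠ 0 →
      ∃ lam : ℂ, lam ≠ 0 ∧
        (((Complex.normSq z * (1 + Complex.normSq u) : ℝ) : ℂ), z, u * z) =
          lam • ((starRingEnd ℂ) z * (1 + (Complex.normSq u : ℂ)), (1 : ℂ), u)) := by
  refine ⟨?_, ?_, ?_⟩
  · intro Z hZ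
    have hpos := nsq_pos hZ
    have hne : (Complex.normSq Z.1 + Complex.normSq Z.2) ≠ 0 := ne_of_gt hpos
    have h1 : inversion Z ≠ 0 := by
      simp only [inversion, smul_ne_zero_iff]
      exact ⟨inv_ne_zero hne, hZ⟩
    refine ⟨h1, ?_⟩
    set r := Complex.normSq Z.1 + Complex.normSq Z.2 with hr
    have hsq : Complex.normSq ((r⁻¹ : ℝ) • Z).1 + Complex.normSq ((r⁻¹ : ℝ) • Z).2
        = r⁻¹ * r⁻¹ * r := by
      simp only [Prod.smul_fst, Prod.smul_snd, Complex.real_smul, map_mul, Complex.normSq_ofReal]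
      ring
    simp only [inversion, ← hr, hsq]
    rw [smul_smul]
    have : (r⁻¹ * r⁻¹ * r)⁻¹ * r⁻¹ = 1 := by
      field_simp
    rw [this, one_smul]
  · have h1 : ContDiffOn ℝ (⊤ : ℕ∞) (fun Z : ℂ × ℂ => (Complex.normSq Z.1 + Complex.normSq Z.2)⁻¹)
        {(0 : ℂ × ℂ)}ᶜ := by
      apply ContDiffOn.inv
      · have hn : ContDiff ℝ (⊤ : ℕ∞) (fun z : ℂ => Complex.normSq z) := by
          have : (fun z : ℂ => Complex.normSq z)
              = fun z : ℂ => z.re * z.re + z.im * z.im := by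
            funext z; exact Complex.normSq_apply z
          rw [this]
          exact (Complex.reCLM.contDiff.mul Complex.reCLM.contDiff).add
            (Complex.imCLM.contDiff.mul Complex.imCLM.contDiff)
        exact ((hn.comp contDiff_fst).add (hn.comp contDiff_snd)).contDiffOn
      · intro Z hZ
        exact ne_of_gt (nsq_pos (by simpa using hZ))
    exact h1.smul contDiffOn_id
  · intro u z hz
    refine ⟨z, hz, ?_⟩
    have : (z : ℂ) * ((starRingEnd ℂ) z) = (Complex.normSq z : ℂ) := by
      rw [Complex.mul_conj]
    simp only [Prod.smul_mk, smul_eq_mul, mul_one]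
    refine Prod.ext ?_ (Prod.ext rfl (mul_comm u z))
    push_cast
    rw [← mul_assoc, this]
end
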